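/- arXiv:2407.18417 — 8 statements merged into one kernel-verified Lean document; each statement's English description precedes it below -/
import Mathlib

section
/- An object X of a small category C is irreducible for the double negation topology if and only if every morphism Y → X in C is a split epimorphism. -/
open CategoryTheory

universe u

/-- An object `X` is `J`-irreducible if the only `J`-covering sieve on `X` is the maximal one. -/
def JIrreducible {C : Type u} [SmallCategory C] (J : GrothendieckTopology C) (X : C) : Prop :=
  ∀ S : Sieve X, S ∈ J X → S = ⊤

/-- An object of a small category is irreducible for the double negation (dense) topology
if and only if every morphism into it is a split epimorphism. -/
theorem stmt1 {C : Type u} [SmallCategory C] (X : C) :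
    JIrreducible (GrothendieckTopology.dense (C := C)) X ↔
      ∀ (Y : C) (f : Y ⟶ X), IsSplitEpi f := by
  constructor
  · intro h Y f
    -- consider S ∪ S^⊥ where S is the sieve generated by f
    let T : Sieve X :=
      { arrows := fun Z g =>
          (∃ s : Z ⟶ Y, s ≫ f = g) ∨ (∀ (W : C) (k : W ⟶ Z) (s : W ⟶ Y), s ≫ f ≠ k ≫ g)
        downward_closed := by
          rintro Z V g (⟨s, hs⟩ | hg) e
          · exact Or.inl ⟨e ≫ s, by simp [hs]⟩
          · refine Or.inr fun W k s hsk => hg W (k ≫ e) s ?_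
            simpa using hsk }
    have hT : T ∈ GrothendieckTopology.dense X := by
      intro Z g
      by_cases hg : ∃ (W : C) (k : W ⟶ Z) (s : W ⟶ Y), s ≫ f = k ≫ g
      · obtain ⟨W, k, s, hs⟩ := hg
        exact ⟨W, k, Or.inl ⟨s, hs⟩⟩
      · push_neg at hg
        exact ⟨Z, 𝟙 Z, Or.inr fun W k s hsk => hg W (k ≫ 𝟙 Z) s (by simpa using hsk)⟩
    have := h T hT
    have h1 : T.arrows (𝟙 X) := by rw [this]; trivial
    rcases h1 with ⟨s, hs⟩ | h1
    · exact ⟨⟨s, by simpa using hs⟩⟩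
    · exact absurd (by simp) (h1 Y f (𝟙 Y))
  · intro h S hS
    obtain ⟨Z, g, hg⟩ := hS (𝟙 X)
    obtain ⟨⟨s, hs⟩⟩ := h Z (g ≫ 𝟙 X)
    simp only [Category.comp_id] at hg hs
    ext W k
    simp only [Sieve.top_apply, iff_true]
    have := S.downward_closed hg (k ≫ s)
    simpa [hs] using this
end

section
/- Given a chain of subtoposes E ⊆ E' ⊆ E'' of toposes (composable geometric embeddings f : E → E' and g : E' → E''), if the composed inclusion E ⊆ E'' is essential (i.e., (f ≫ g)* has a left adjoint), then the inclusion E ⊆ E' is essential. -/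
/-!
If `F ⊣ G` with `G` fully faithful, the counit `G ⋙ F ⟶ 𝟭` is an isomorphism, so
`H ≅ G ⋙ (F ⋙ H)` is a composite of right adjoints whenever `F ⋙ H` is one. In terms of hom-sets,
with `L ⊣ F ⋙ H`, the left adjoint `L ⋙ F` of `H` comes from
`Hom(H x, y) ≅ Hom(H (F (G x)), y) ≅ Hom(G x, L y) ≅ Hom(x, F (L y))`.
-/

open CategoryTheory

universe u₁ u₂ u₃ v₁ v₂ v₃

namespace CategoryTheory.Adjunction

lemma isRightAdjoint_of_isRightAdjoint_comp {C : Type u₁} {D : Type u₂} {E : Type u₃}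
    [Category.{v₁} C] [Category.{v₂} D] [Category.{v₃} E]
    {F : C ⥤ D} {G : D ⥤ C} (adj : F ⊣ G) [G.Full] [G.Faithful]
    (H : D ⥤ E) [(F ⋙ H).IsRightAdjoint] : H.IsRightAdjoint :=
  have := adj.isRightAdjoint
  Functor.isRightAdjoint_of_iso
    (Functor.isoWhiskerRight (asIso adj.counit) H ≪≫ H.leftUnitor : G ⋙ F ⋙ H ≅ H)

end CategoryTheory.Adjunction

theorem stmt7_general {E : Type u₁} {E' : Type u₂} {E'' : Type u₃}
    [Category.{v₁} E] [Category.{v₂} E'] [Category.{v₃} E'']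
    (fInv : E' ⥤ E) (gInv : E'' ⥤ E') (gDir : E' ⥤ E'')
    (adjg : gInv ⊣ gDir)
    [gDir.Full] [gDir.Faithful]
    [(gInv ⋙ fInv).IsRightAdjoint] :
    fInv.IsRightAdjoint :=
  adjg.isRightAdjoint_of_isRightAdjoint_comp fInv

/-- Given a chain of geometric embeddings, formalized via adjunctions
`fInv ⊣ fDir` and `gInv ⊣ gDir` with fully faithful direct images, if the composed inclusion
is essential (the composite inverse image `gInv ⋙ fInv` has a left adjoint), then the first
inclusion is essential (`fInv` has a left adjoint). -/
theorem stmt7 {E : Type u₁} {E' : Type u₂} {E'' : Type u₃}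
    [Category.{v₁} E] [Category.{v₂} E'] [Category.{v₃} E'']
    (fInv : E' ⥤ E) (fDir : E ⥤ E') (gInv : E'' ⥤ E') (gDir : E' ⥤ E'')
    (adjf : fInv ⊣ fDir) (adjg : gInv ⊣ gDir)
    [fDir.Full] [fDir.Faithful] [gDir.Full] [gDir.Faithful]
    [(gInv ⋙ fInv).IsRightAdjoint] :
    fInv.IsRightAdjoint :=
  stmt7_general fInv gInv gDir adjg
end

section
/- Suppose a small category C satisfies: (1) for each object X, the poset reflection of the slice C/X is Artinian (well-founded under strict inequality of images), and (2) for each f : Y → X there exists f' : Y' → X with im(f) = im(f') such that for every r : Z → Y', if im(r ≫ f') = im(f') then r is a split epimorphism. Then every Grothendieck topology on C is rigid. -/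
open CategoryTheory

universe u

/-- `im f ≤ im g` in the poset reflection of `C / X`: `f` factors through `g` in `C`. -/
def ImLE {C : Type u} [SmallCategory C] {X Y W : C} (f : Y ⟶ X) (g : W ⟶ X) : Prop :=
  ∃ h : Y ⟶ W, h ≫ g = f

/-- The poset reflection of `C / X` is Artinian: there is no infinite strictly
decreasing sequence of images. -/
def ArtinianSlice {C : Type u} [SmallCategory C] (X : C) : Prop :=
  ¬ ∃ (Y : ℕ → C) (f : ∀ n, Y n ⟶ X),
      ∀ n, ImLE (f (n + 1)) (f n) ∧ ¬ ImLE (f n) (f (n + 1))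

/-- Condition (⋆): every `f : Y ⟶ X` has an image-equivalent `f' : Y' ⟶ X` such that any
`r : Z ⟶ Y'` with `im (r ≫ f') = im f'` is a split epimorphism. -/
def StarCond (C : Type u) [SmallCategory C] : Prop :=
  ∀ {X Y : C} (f : Y ⟶ X), ∃ (Y' : C) (f' : Y' ⟶ X),
    ImLE f f' ∧ ImLE f' f ∧
      ∀ {Z : C} (r : Z ⟶ Y'), ImLE f' (r ≫ f') → IsSplitEpi r

/-- A Grothendieck topology `J` is rigid if every object admits a `J`-covering sieve generated
by morphisms whose domains are `J`-irreducible. -/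
def JRigid {C : Type u} [SmallCategory C] (J : GrothendieckTopology C) : Prop :=
  ∀ X : C, Sieve.generate (fun Y (_ : Y ⟶ X) => JIrreducible J Y) ∈ J X

/-!
By well-founded induction on `im f`, the sieve generated by the `J`-irreducible objects pulls back
to a `J`-covering sieve along every `f : Y ⟶ X`; taking `f = 𝟙 X` gives rigidity. Replace `f` by
the image-equivalent `f' : Y' ⟶ X` of (⋆). Either `Y'` is irreducible, or it carries a covering
sieve `R ≠ ⊤`. No `r ∈ R` is a split epimorphism, so (⋆) forces `im (r ≫ f') < im f`, and the
induction hypothesis combines with transitivity of `J`.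
-/

section

variable {C : Type u} [SmallCategory C]

theorem ImLE.trans {X Y W V : C} {f : Y ⟶ X} {g : W ⟶ X} {k : V ⟶ X}
    (hfg : ImLE f g) (hgk : ImLE g k) : ImLE f k := by
  obtain ⟨a, rfl⟩ := hfg
  obtain ⟨b, rfl⟩ := hgk
  exact ⟨a ≫ b, Category.assoc a b k⟩

theorem imLE_comp {X Y Z : C} (r : Z ⟶ Y) (g : Y ⟶ X) : ImLE (r ≫ g) g :=
  ⟨r, rfl⟩

def ImLT (X : C) (a b : Σ Y : C, Y ⟶ X) : Prop :=
  ImLE a.2 b.2 ∧ ¬ ImLE b.2 a.2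

theorem wellFounded_imLT {X : C} (hX : ArtinianSlice X) : WellFounded (ImLT X) :=
  wellFounded_iff_isEmpty_descending_chain.mpr
    ⟨fun ⟨a, ha⟩ => hX ⟨fun n => (a n).1, fun n => (a n).2, ha⟩⟩

end

namespace CategoryTheory

variable {C : Type u} [SmallCategory C]

theorem Sieve.eq_top_of_isSplitEpi_mem {X Y : C} (S : Sieve X) (f : Y ⟶ X) [IsSplitEpi f]
    (hf : S f) : S = ⊤ := by
  simpa using Sieve.generate_of_contains_isSplitEpi f hf

theorem GrothendieckTopology.pullback_mem_of_imLE (J : GrothendieckTopology C) {X Y W : C}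
    {S : Sieve X} {f : Y ⟶ X} {g : W ⟶ X} (hfg : ImLE f g) (hg : S.pullback g ∈ J W) :
    S.pullback f ∈ J Y := by
  obtain ⟨h, rfl⟩ := hfg
  simpa only [Sieve.pullback_comp] using J.pullback_stable h hg

def irreducibleSieve (J : GrothendieckTopology C) (X : C) : Sieve X :=
  Sieve.generate fun Y (_ : Y ⟶ X) => JIrreducible J Y

theorem irreducibleSieve_pullback_eq_top {J : GrothendieckTopology C} {X Y : C}
    (hY : JIrreducible J Y) (f : Y ⟶ X) : (irreducibleSieve J X).pullback f = ⊤ :=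
  Sieve.pullback_eq_top_of_mem _ (Sieve.le_generate _ _ f hY)

theorem imLT_comp_of_mem_of_ne_top {X Y Y' Z : C} {f : Y ⟶ X} {f' : Y' ⟶ X} (hf'f : ImLE f' f)
    (hsplit : ∀ {Z : C} (r : Z ⟶ Y'), ImLE f' (r ≫ f') → IsSplitEpi r)
    {R : Sieve Y'} (hR : R ≠ ⊤) {r : Z ⟶ Y'} (hr : R r) : ImLT X ⟨Z, r ≫ f'⟩ ⟨Y, f⟩ := by
  refine ⟨(imLE_comp r f').trans hf'f, fun hf => ?_⟩
  have := hsplit r (hf'f.trans hf)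
  exact hR (R.eq_top_of_isSplitEpi_mem r hr)

theorem pullback_irreducibleSieve_mem {X Y : C} (hX : ArtinianSlice X) (hstar : StarCond C)
    (J : GrothendieckTopology C) (f : Y ⟶ X) : (irreducibleSieve J X).pullback f ∈ J Y := by
  suffices ∀ a : Σ Y : C, Y ⟶ X, (irreducibleSieve J X).pullback a.2 ∈ J a.1 from this ⟨Y, f⟩
  intro a
  induction a using (wellFounded_imLT hX).induction with
  | _ a ih =>
  obtain ⟨Y, f⟩ := a
  obtain ⟨Y', f', hff', hf'f, hsplit⟩ := hstar f
  refine J.pullback_mem_of_imLE hff' ?_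
  by_cases hirr : JIrreducible J Y'
  · exact J.covering_of_eq_top (irreducibleSieve_pullback_eq_top hirr f')
  · obtain ⟨R, hR, hRtop⟩ : ∃ R ∈ J Y', R ≠ ⊤ := by simpa [JIrreducible] using hirr
    refine J.transitive hR _ fun Z r hr => ?_
    rw [← Sieve.pullback_comp]
    exact ih ⟨Z, r ≫ f'⟩ (imLT_comp_of_mem_of_ne_top hf'f hsplit hRtop hr)

end CategoryTheory

/-- If all slices of `C` have Artinian poset reflections and condition (⋆) holds, then every
Grothendieck topology on `C` is rigid. -/
theorem stmt9 {C : Type u} [SmallCategory C]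
    (h1 : ∀ X : C, ArtinianSlice X) (h2 : StarCond C) :
    ∀ J : GrothendieckTopology C, JRigid J := by
  intro J X
  have hcover := pullback_irreducibleSieve_mem (h1 X) h2 J (𝟙 X)
  rwa [Sieve.pullback_id] at hcover
end

section
/- If a small category C satisfies the hypotheses of universal rigidity, then C is Cauchy-complete: every idempotent splits. -/
open CategoryTheory

universe u

/-- A universally rigid category (Artinian slices plus condition (⋆)) is Cauchy-complete:
every idempotent splits. -/
theorem stmt10 {C : Type u} [SmallCategory C]
    (h1 : ∀ X : C, ArtinianSlice X) (h2 : StarCond C) :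
    IsIdempotentComplete C := by
  constructor
  intro X p hp
  obtain ⟨Y', f', ⟨a, ha⟩, ⟨b, hb⟩, hr⟩ := h2 p
  have hfe : f' ≫ p = f' := by
    conv_lhs => rw [← hb, Category.assoc, hp]
    exact hb
  have hse : IsSplitEpi (f' ≫ a) := by
    refine hr _ ⟨𝟙 _, ?_⟩
    rw [Category.id_comp, Category.assoc, ha, hfe]
  obtain ⟨⟨s, hs⟩⟩ := hse
  have hid : f' ≫ a = 𝟙 Y' := by
    have : (s ≫ (f' ≫ a)) ≫ (f' ≫ a) = f' ≫ a := by
      rw [hs, Category.id_comp]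
    calc f' ≫ a = (s ≫ (f' ≫ a)) ≫ (f' ≫ a) := this.symm
    _ = s ≫ (f' ≫ (a ≫ f') ≫ a) := by simp only [Category.assoc]
    _ = s ≫ (f' ≫ a) := by rw [ha, ← Category.assoc f', hfe]
    _ = 𝟙 Y' := hs
  exact ⟨Y', f', a, hid, ha⟩
end

section
/- Let C be a Cauchy-complete small category whose slices have Artinian poset reflections, and suppose every endomorphism monoid End(X) has enough idempotents on the left. Then for each f : Y → X there exists f' : Y' → X with im(f) = im(f') such that every r : Z → Y' with im(r ≫ f') = im(f') is a split epimorphism. -/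
open CategoryTheory

universe u

/-- Iterated composition `f^n` of an endomorphism. -/
def endPow {C : Type u} [SmallCategory C] {X : C} (f : X ⟶ X) : ℕ → (X ⟶ X)
  | 0 => 𝟙 X
  | n + 1 => endPow f n ≫ f

/-- The endomorphism monoid of `X` has enough idempotents on the left: every endomorphism `f`
either is left-invertible (`∃ g, f ≫ g = 𝟙`, i.e. `g * f = 1` in the classical order),
or admits a non-identity idempotent `e` and `n ≥ 1` with `e * f^n = f^n`
(i.e. `f^n ≫ e = f^n` diagrammatically). -/
def EnoughIdempotentsLeft {C : Type u} [SmallCategory C] (X : C) : Prop :=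
  ∀ f : X ⟶ X,
    (∃ g : X ⟶ X, f ≫ g = 𝟙 X) ∨
      ∃ (e : X ⟶ X) (n : ℕ), e ≫ e = e ∧ e ≠ 𝟙 X ∧ 1 ≤ n ∧ endPow f n ≫ e = endPow f n

section Aux

variable {C : Type u} [SmallCategory C]

lemma endPow_cancel {X : C} {u g : X ⟶ X} (h : u ≫ g = 𝟙 X) :
    ∀ n : ℕ, endPow u n ≫ endPow g n = 𝟙 X := by
  have comm : ∀ n : ℕ, endPow g n ≫ g = g ≫ endPow g n := by
    intro n
    induction n with
    | zero => simp [endPow]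
    | succ n ih =>
      show (endPow g n ≫ g) ≫ g = g ≫ endPow g n ≫ g
      rw [ih, Category.assoc, ih]
  intro n
  induction n with
  | zero => simp [endPow]
  | succ n ih =>
    show (endPow u n ≫ u) ≫ endPow g n ≫ g = 𝟙 X
    rw [comm n]
    calc (endPow u n ≫ u) ≫ g ≫ endPow g n
        = endPow u n ≫ (u ≫ g) ≫ endPow g n := by simp only [Category.assoc]
      _ = endPow u n ≫ endPow g n := by rw [h, Category.id_comp]
      _ = 𝟙 X := ih

/-- In a monoid with enough idempotents on the left, every left-invertible
element is invertible. -/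
lemma leftInv_twoSided {X : C} (hX : EnoughIdempotentsLeft X) {u g : X ⟶ X}
    (h : u ≫ g = 𝟙 X) : g ≫ u = 𝟙 X := by
  rcases hX g with ⟨g', hg'⟩ | ⟨e, n, _, hne, _, hpow⟩
  · have hu : u = g' := by
      calc u = u ≫ g ≫ g' := by rw [hg', Category.comp_id]
        _ = (u ≫ g) ≫ g' := by rw [Category.assoc]
        _ = g' := by rw [h, Category.id_comp]
    rw [hu, hg']
  · exfalso
    apply hne
    have hc := endPow_cancel h n
    calc e = (endPow u n ≫ endPow g n) ≫ e := by rw [hc, Category.id_comp]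
      _ = endPow u n ≫ endPow g n ≫ e := by rw [Category.assoc]
      _ = endPow u n ≫ endPow g n := by rw [hpow]
      _ = 𝟙 X := hc

lemma endPow_fix {X : C} {u : X ⟶ X} {W : C} {f : X ⟶ W} (h : u ≫ f = f) :
    ∀ n : ℕ, endPow u n ≫ f = f := by
  intro n
  induction n with
  | zero => simp [endPow]
  | succ n ih =>
    show (endPow u n ≫ u) ≫ f = f
    rw [Category.assoc, h, ih]

/-- State of the descent construction. -/
structure AuxSt {X Y : C} (f : Y ⟶ X) where
  Y'' : C
  f'' : Y'' ⟶ X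
  g : Y'' ⟶ Y
  ρ : Y ⟶ Y''
  hgρ : g ≫ ρ = 𝟙 Y''
  hff : ImLE f f''
  hf'f : ImLE f'' f

lemma descent_step {X Y : C} {f : Y ⟶ X}
    (hC : IsIdempotentComplete C) (hE : ∀ Z : C, EnoughIdempotentsLeft Z)
    (hP : ¬ ∃ (Y' : C) (f' : Y' ⟶ X), ImLE f f' ∧ ImLE f' f ∧
        ∀ u : Y' ⟶ Y', u ≫ f' = f' → ∃ v : Y' ⟶ Y', u ≫ v = 𝟙 Y' ∧ v ≫ u = 𝟙 Y')
    (s : AuxSt f) : ∃ t : AuxSt f, ImLE t.g s.g ∧ ¬ ImLE s.g t.g := by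
  have hbad : ¬ ∀ u : s.Y'' ⟶ s.Y'', u ≫ s.f'' = s.f'' →
      ∃ v : s.Y'' ⟶ s.Y'', u ≫ v = 𝟙 s.Y'' ∧ v ≫ u = 𝟙 s.Y'' :=
    fun h => hP ⟨s.Y'', s.f'', s.hff, s.hf'f, h⟩
  push_neg at hbad
  obtain ⟨u, hu, hnv⟩ := hbad
  rcases hE s.Y'' u with ⟨g, hg⟩ | ⟨e, n, _, hne, _, hpow⟩
  · exact absurd (leftInv_twoSided (hE s.Y'') hg) (hnv g hg)
  · obtain ⟨Z, i, p, hip, hpi⟩ := hC.idempotents_split s.Y'' e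
      (by assumption)
    -- `i : Z ⟶ s.Y''`, `p : s.Y'' ⟶ Z`, `i ≫ p = 𝟙 Z`, `p ≫ i = e`
    obtain ⟨a, ha⟩ := s.hff
    obtain ⟨b, hb⟩ := s.hf'f
    have hfix : endPow u n ≫ s.f'' = s.f'' := endPow_fix hu n
    have hgρ' : (i ≫ s.g) ≫ s.ρ ≫ p = 𝟙 Z := by
      calc (i ≫ s.g) ≫ s.ρ ≫ p = i ≫ (s.g ≫ s.ρ) ≫ p := by
            simp only [Category.assoc]
        _ = i ≫ 𝟙 s.Y'' ≫ p := by rw [s.hgρ]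
        _ = 𝟙 Z := by rw [Category.id_comp]; exact hip
    have hff' : ImLE f (i ≫ s.f'') := by
      refine ⟨a ≫ endPow u n ≫ p, ?_⟩
      calc (a ≫ endPow u n ≫ p) ≫ i ≫ s.f''
          = a ≫ endPow u n ≫ (p ≫ i) ≫ s.f'' := by simp only [Category.assoc]
        _ = a ≫ endPow u n ≫ e ≫ s.f'' := by rw [hpi]
        _ = a ≫ (endPow u n ≫ e) ≫ s.f'' := by simp only [Category.assoc]
        _ = a ≫ endPow u n ≫ s.f'' := by rw [hpow]
        _ = a ≫ s.f'' := by rw [hfix]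
        _ = f := ha
    have hf'f' : ImLE (i ≫ s.f'') f := ⟨i ≫ b, by rw [Category.assoc, hb]⟩
    have hstrict : ¬ ImLE s.g (i ≫ s.g) := by
      rintro ⟨h, hh⟩
      -- hh : h ≫ i ≫ s.g = s.g
      apply hne
      have hhi : h ≫ i = 𝟙 s.Y'' := by
        have key : (h ≫ i ≫ s.g) ≫ s.ρ = s.g ≫ s.ρ := by rw [hh]
        calc h ≫ i = (h ≫ i) ≫ 𝟙 s.Y'' := by rw [Category.comp_id]
          _ = (h ≫ i) ≫ s.g ≫ s.ρ := by rw [s.hgρ]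
          _ = (h ≫ i ≫ s.g) ≫ s.ρ := by simp only [Category.assoc]
          _ = s.g ≫ s.ρ := key
          _ = 𝟙 s.Y'' := s.hgρ
      have hph : p = h := by
        calc p = 𝟙 s.Y'' ≫ p := by rw [Category.id_comp]
          _ = (h ≫ i) ≫ p := by rw [hhi]
          _ = h ≫ i ≫ p := by rw [Category.assoc]
          _ = h ≫ 𝟙 Z := by rw [hip]
          _ = h := by rw [Category.comp_id]
      calc e = p ≫ i := hpi.symm
        _ = h ≫ i := by rw [hph]
        _ = 𝟙 s.Y'' := hhi
    exact ⟨⟨Z, i ≫ s.f'', i ≫ s.g, s.ρ ≫ p, hgρ', hff', hf'f'⟩, ⟨i, rfl⟩, hstrict⟩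

end Aux

/-- If `C` is Cauchy-complete, its slices have Artinian poset reflections, and every
endomorphism monoid has enough idempotents on the left, then condition (⋆) holds. -/
theorem stmt11 {C : Type u} [SmallCategory C]
    (hC : IsIdempotentComplete C)
    (h1 : ∀ X : C, ArtinianSlice X)
    (h2 : ∀ X : C, EnoughIdempotentsLeft X) :
    StarCond C := by
  intro X Y f
  by_cases hP : ∃ (Y' : C) (f' : Y' ⟶ X), ImLE f f' ∧ ImLE f' f ∧
      ∀ u : Y' ⟶ Y', u ≫ f' = f' → ∃ v : Y' ⟶ Y', u ≫ v = 𝟙 Y' ∧ v ≫ u = 𝟙 Y'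
  · obtain ⟨Y', f', hff', hf'f, hiso⟩ := hP
    refine ⟨Y', f', hff', hf'f, ?_⟩
    rintro Z r ⟨s, hs⟩
    obtain ⟨v, _, hv2⟩ := hiso (s ≫ r) (by rw [Category.assoc]; exact hs)
    exact ⟨⟨⟨v ≫ s, by rw [Category.assoc]; exact hv2⟩⟩⟩
  · exfalso
    have hstep := fun s => descent_step hC h2 hP s
    let s0 : AuxSt f := ⟨Y, f, 𝟙 Y, 𝟙 Y, by simp, ⟨𝟙 Y, by simp⟩, ⟨𝟙 Y, by simp⟩⟩
    let seq : ℕ → AuxSt f := fun n => Nat.rec s0 (fun _ s => (hstep s).choose) n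
    apply h1 Y
    refine ⟨fun n => (seq n).Y'', fun n => (seq n).g, fun n => ?_⟩
    exact (hstep (seq n)).choose_spec
end

section
/- Let C be a Cauchy-complete small category whose slices have Artinian poset reflections, and suppose condition (⋆) holds: for each f : Y → X there exists f' : Y' → X with im(f) = im(f') such that every r : Z → Y' with im(r ≫ f') = im(f') is split epi. Then for each f : Y → X and g : Y → Y with g ≫ f = f, either g is left-invertible or there exists a non-identity idempotent e : Y → Y with e ≫ f = f. -/
open CategoryTheory

universe u

/-- Under Cauchy-completeness, Artinian slices and condition (⋆), condition (⋆⋆) follows: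
for `f : Y ⟶ X` and `g : Y ⟶ Y` with `g ≫ f = f`, either `g` is left-invertible or there is a
non-identity idempotent `e : Y ⟶ Y` with `e ≫ f = f`. -/
theorem stmt12 {C : Type u} [SmallCategory C]
    (hC : IsIdempotentComplete C)
    (h1 : ∀ X : C, ArtinianSlice X)
    (h2 : StarCond C)
    {X Y : C} (f : Y ⟶ X) (g : Y ⟶ Y) (hg : g ≫ f = f) :
    (∃ h : Y ⟶ Y, g ≫ h = 𝟙 Y) ∨
      ∃ e : Y ⟶ Y, e ≫ e = e ∧ e ≠ 𝟙 Y ∧ e ≫ f = f := by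
  obtain ⟨Y', f', ⟨a, ha⟩, ⟨b, hb⟩, hr⟩ := h2 f
  have hrf' : (b ≫ g ≫ a) ≫ f' = f' := by
    rw [Category.assoc, Category.assoc, ha, hg, hb]
  obtain ⟨⟨s, hs⟩⟩ := (hr (b ≫ g ≫ a) ⟨𝟙 Y', by rw [Category.id_comp, hrf']⟩).exists_splitEpi
  by_cases he : g ≫ a ≫ s ≫ b = 𝟙 Y
  · exact Or.inl ⟨a ≫ s ≫ b, he⟩
  · refine Or.inr ⟨g ≫ a ≫ s ≫ b, ?_, he, ?_⟩
    · have : s ≫ b ≫ g ≫ a = 𝟙 Y' := by simpa using hs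
      calc (g ≫ a ≫ s ≫ b) ≫ g ≫ a ≫ s ≫ b
          = g ≫ a ≫ (s ≫ b ≫ g ≫ a) ≫ s ≫ b := by simp
        _ = g ≫ a ≫ s ≫ b := by rw [this]; simp
    · have hsf' : s ≫ f' = f' := by
        simpa [ha, hg, hb] using hs =≫ f'
      calc (g ≫ a ≫ s ≫ b) ≫ f = g ≫ a ≫ s ≫ f' := by rw [← hb]; simp
        _ = g ≫ a ≫ f' := by rw [hsf']
        _ = f := by rw [ha, hg]
end

section
/- Let C be a small category equipped with an ordinal-valued degree function d on objects such that every morphism factors as a split epimorphism followed by either an isomorphism or a morphism f : A → B with d(A) < d(B). Then Cleaner has a winning strategy in the game of split epimorphisms on C; in particular every Grothendieck topology on C is rigid. -/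
open CategoryTheory

universe u

/-- Cleaner has a winning strategy in the game of split epimorphisms from position `f : Y ⟶ X`:
Cleaner can factor `f = r ≫ f'` with `r` a split epimorphism so that every Reducer move,
precomposing `f'` with a non-split-epimorphism `k`, leads to a position where Cleaner again
wins.  Well-foundedness of this inductive predicate expresses that the game terminates. -/
inductive CleanerWins {C : Type u} [SmallCategory C] {X : C} : ∀ {Y : C}, (Y ⟶ X) → Prop
  | intro {Y Y' : C} (f : Y ⟶ X) (r : Y ⟶ Y') (f' : Y' ⟶ X)
      (hr : IsSplitEpi r) (hf : r ≫ f' = f)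
      (h : ∀ {Z : C} (k : Z ⟶ Y'), ¬ IsSplitEpi k → CleanerWins (k ≫ f')) :
      CleanerWins f


lemma aux14 {C : Type u} [SmallCategory C] (d : C → Ordinal.{u})
    (hd : ∀ {A B : C} (f : A ⟶ B), ∃ (A' : C) (r : A ⟶ A') (g : A' ⟶ B),
      IsSplitEpi r ∧ r ≫ g = f ∧ (IsIso g ∨ d A' < d B)) :
    ∀ (o : Ordinal.{u}) {X Z Y' : C} (k : Z ⟶ Y') (g : Y' ⟶ X),
      ¬ IsSplitEpi k → d Y' ≤ o → CleanerWins (k ≫ g) := by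
  intro o
  induction o using Ordinal.induction with
  | h o IH =>
    intro X Z Y' k g hk hle
    obtain ⟨Z', r', g', hr', hfact, hor⟩ := hd k
    have hgiso : ¬ IsIso g' := by
      intro h
      apply hk
      rw [← hfact]
      haveI := hr'
      infer_instance
    have hZ' : d Z' < d Y' := hor.resolve_left hgiso
    exact CleanerWins.intro (k ≫ g) r' (g' ≫ g) hr'
      (by rw [← Category.assoc, hfact])
      (fun k₂ hk₂ => IH (d Z') (lt_of_lt_of_le hZ' hle) k₂ (g' ≫ g) hk₂ le_rfl)

/-- If `C` carries an ordinal-valued degree function such that every morphism factors as a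
split epimorphism followed by an isomorphism or by a morphism which strictly decreases the
degree, then Cleaner has a winning strategy from every position; in particular every
Grothendieck topology on `C` is rigid. -/
theorem stmt14 {C : Type u} [SmallCategory C] (d : C → Ordinal.{u})
    (hd : ∀ {A B : C} (f : A ⟶ B), ∃ (A' : C) (r : A ⟶ A') (g : A' ⟶ B),
      IsSplitEpi r ∧ r ≫ g = f ∧ (IsIso g ∨ d A' < d B)) :
    (∀ {X Y : C} (f : Y ⟶ X), CleanerWins f) ∧
      (∀ J : GrothendieckTopology C, JRigid J) := by
  have win : ∀ {X Y : C} (f : Y ⟶ X), CleanerWins f := by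
    intro X Y f
    obtain ⟨A', r, g, hr, hfact, _⟩ := hd f
    exact CleanerWins.intro f r g hr hfact
      (fun k hk => aux14 d hd (d A') k g hk le_rfl)
  refine ⟨win, fun J X => ?_⟩
  set S := Sieve.generate (fun Y (_ : Y ⟶ X) => JIrreducible J Y) with hSdef
  have key : ∀ {Y : C} (f : Y ⟶ X), CleanerWins f → S.pullback f ∈ J Y := by
    intro Y f hf
    induction hf with
    | @intro Y Y' f r f' hr hfact h IH =>
      by_cases hirr : JIrreducible J Y'
      · have hSf' : S f' := ⟨Y', 𝟙 _, f', hirr, Category.id_comp _⟩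
        have hSf : S f := by
          rw [← hfact]; exact S.downward_closed hSf' r
        rw [Sieve.pullback_eq_top_of_mem S hSf]
        exact J.top_mem Y
      · simp only [JIrreducible, not_forall] at hirr
        obtain ⟨R, hR, hRne⟩ := hirr
        have hnosplit : ∀ {Z : C} (k : Z ⟶ Y'), R k → ¬ IsSplitEpi k := by
          intro Z k hkR hksp
          obtain ⟨⟨s, hs⟩⟩ := hksp
          apply hRne
          rw [← Sieve.id_mem_iff_eq_top, ← hs]
          exact R.downward_closed hkR s
        have hT : S.pullback f' ∈ J Y' := by
          refine J.transitive hR _ (fun Z k hkR => ?_)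
          rw [← Sieve.pullback_comp]
          exact IH k (hnosplit k hkR)
        rw [← hfact, Sieve.pullback_comp]
        exact J.pullback_stable r hT
  have := key (𝟙 X) (win (𝟙 X))
  rwa [Sieve.pullback_id] at this
end

section
/- Let S be the semigroup (under composition) of injections f : ℕ → ℕ whose complement of image is infinite (|ℕ \ f[ℕ]| = |ℕ|), with opposite multiplication. Then S is non-empty, has no idempotent element, and satisfies S·a = S for all a ∈ S. -/
/-- Consider the set `S` of injections `f : ℕ → ℕ` whose image has infinite complement, a
semigroup under the opposite of composition (`a * b = b ∘ a`).  Then `S` is non-empty, contains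
no idempotent, and satisfies `S · a = S` for every `a ∈ S` (every `c ∈ S` is of the form
`a * b = b ∘ a` for some `b ∈ S`). -/
theorem stmt16 :
    (∃ f : ℕ → ℕ, Function.Injective f ∧ (Set.range f)ᶜ.Infinite) ∧
      (∀ f : ℕ → ℕ, Function.Injective f → (Set.range f)ᶜ.Infinite → f ∘ f ≠ f) ∧
      (∀ a c : ℕ → ℕ, Function.Injective a → (Set.range a)ᶜ.Infinite →
        Function.Injective c → (Set.range c)ᶜ.Infinite →
        ∃ b : ℕ → ℕ, Function.Injective b ∧ (Set.range b)ᶜ.Infinite ∧ b ∘ a = c) := by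
  classical
  refine ⟨⟨fun n => 2 * n, fun x y h => by simp only [] at h; omega, ?_⟩, ?_, ?_⟩
  · apply Set.infinite_of_injective_forall_mem (f := fun n : ℕ => 2 * n + 1)
    · intro x y h; simp only [] at h; omega
    · intro n
      simp only [Set.mem_compl_iff, Set.mem_range, not_exists]
      intro m; omega
  · intro f hf hinf hidem
    have hid : f = id := funext fun n => hf (congrFun hidem n)
    subst hid
    simp [Set.range_id] at hinf
  · intro a c ha _ hc hcc
    obtain e := hcc.natEmbedding
    set g : ℕ → ℕ := fun n => (e (2 * n) : ℕ) with hg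
    have hge : ∀ n, (g n) ∈ (Set.range c)ᶜ := fun n => (e (2 * n)).2
    have hginj : Function.Injective g := by
      intro x y h
      have := e.injective (Subtype.ext h); omega
    set b : ℕ → ℕ := fun m => if h : ∃ n, a n = m then c h.choose else g m with hb
    have hba : ∀ n, b (a n) = c n := by
      intro n
      have h : ∃ k, a k = a n := ⟨n, rfl⟩
      simp only [hb, dif_pos h]
      exact congrArg c (ha h.choose_spec)
    refine ⟨b, ?_, ?_, funext hba⟩
    · intro x y hxy
      by_cases hx : ∃ n, a n = x <;> by_cases hy : ∃ n, a n = y <;>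
        simp only [hb, hx, hy, dif_pos, dif_neg, not_false_iff] at hxy
      · rw [← hx.choose_spec, ← hy.choose_spec, hc hxy]
      · exact absurd ⟨hx.choose, hxy⟩ (hge y)
      · exact absurd ⟨hy.choose, hxy.symm⟩ (hge x)
      · exact hginj hxy
    · apply Set.infinite_of_injective_forall_mem (f := fun n : ℕ => (e (2 * n + 1) : ℕ))
      · intro x y h
        simp only [] at h
        have := e.injective (Subtype.ext h); omega
      · intro n
        simp only [Set.mem_compl_iff, Set.mem_range, not_exists]
        intro m hm
        by_cases h : ∃ k, a k = m
        · simp only [hb, dif_pos h] at hm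
          exact (e (2 * n + 1)).2 ⟨h.choose, hm⟩
        · simp only [hb, dif_neg h] at hm
          have := e.injective (Subtype.ext hm)
          omega
end
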